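/- arXiv:2011.09287 — 5 statements merged into one kernel-verified Lean document; each statement's English description precedes it below -/
import Mathlib

section
/- Let α, β ∈ [0, π/2] and let P₁₂ = a₁a₁* + a₂a₂* be the orthogonal projection onto span{a₁, a₂} ⊂ ℂ²⊗ℂ², where a₁ = cosα·|00⟩ − sinα·|11⟩ and a₂ = cosβ·|01⟩ − sinβ·|10⟩. Then the partial transpose of P₁₂ (transposition on the second tensor factor) has eigenvalues (1/4)(2 ± √2·√(2 + cos4α − cos4β)) and (1/4)(2 ± √2·√(2 − cos4α + cos4β)). -/
noncomputable section

open scoped ComplexOrder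

/-- The two-qubit Hilbert space ℂ² ⊗ ℂ², modeled as ℂ^(2×2) with the standard inner product. -/
abbrev TwoQubit : Type := EuclideanSpace ℂ (Fin 2 × Fin 2)

/-- The computational basis vector |ab⟩. -/
def ket (a b : Fin 2) : TwoQubit := EuclideanSpace.single (a, b) 1

/-- A vector is a product vector if it is of the form u ⊗ w. -/
def IsProductVec (v : TwoQubit) : Prop :=
  ∃ u w : Fin 2 → ℂ, ∀ a b : Fin 2, v (a, b) = u a * w b

/-- The 2×2 coefficient matrix of a vector in ℂ² ⊗ ℂ². -/
def coeffMat (v : TwoQubit) : Matrix (Fin 2) (Fin 2) ℂ :=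
  Matrix.of fun a b => v (a, b)

/-- Partial transpose (on the second tensor factor) of an operator on ℂ² ⊗ ℂ². -/
def ptrans (M : Matrix (Fin 2 × Fin 2) (Fin 2 × Fin 2) ℂ) :
    Matrix (Fin 2 × Fin 2) (Fin 2 × Fin 2) ℂ :=
  Matrix.of fun p q => M (p.1, q.2) (q.1, p.2)

/-- The matrix of the orthogonal projection vv* + ww* onto span{v, w} (for orthonormal v, w). -/
def projMat (v w : TwoQubit) : Matrix (Fin 2 × Fin 2) (Fin 2 × Fin 2) ℂ :=
  Matrix.of fun p q => v p * star (v q) + w p * star (w q)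

/-- `M` has a strictly negative (real) eigenvalue. -/
def HasNegEig (M : Matrix (Fin 2 × Fin 2) (Fin 2 × Fin 2) ℂ) : Prop :=
  ∃ c : ℝ, c < 0 ∧ ∃ x : (Fin 2 × Fin 2) → ℂ, x ≠ 0 ∧ M.mulVec x = (c : ℂ) • x

/-- An operator on ℂ² ⊗ ℂ² is separable if it is a finite sum of Kronecker products of
positive semidefinite operators. -/
def SeparableOp (M : Matrix (Fin 2 × Fin 2) (Fin 2 × Fin 2) ℂ) : Prop :=
  ∃ (n : ℕ) (A B : Fin n → Matrix (Fin 2) (Fin 2) ℂ),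
    (∀ i, (A i).PosSemidef) ∧ (∀ i, (B i).PosSemidef) ∧
    M = ∑ i, Matrix.kroneckerMap (· * ·) (A i) (B i)

/-- The state a₁ = cos α |00⟩ − sin α |11⟩ of the ensemble A_γ^[α,β]. -/
def aVec1 (α : ℝ) : TwoQubit :=
  (Real.cos α : ℂ) • ket 0 0 - (Real.sin α : ℂ) • ket 1 1

/-- The state a₂ = cos β |01⟩ − sin β |10⟩ of the ensemble A_γ^[α,β]. -/
def aVec2 (β : ℝ) : TwoQubit :=
  (Real.cos β : ℂ) • ket 0 1 - (Real.sin β : ℂ) • ket 1 0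

/-- The state a₃ = sin γ sin α |00⟩ + cos γ sin β |01⟩ + cos γ cos β |10⟩ + sin γ cos α |11⟩. -/
def aVec3 (α β γ : ℝ) : TwoQubit :=
  ((Real.sin γ * Real.sin α : ℝ) : ℂ) • ket 0 0 + ((Real.cos γ * Real.sin β : ℝ) : ℂ) • ket 0 1 +
  ((Real.cos γ * Real.cos β : ℝ) : ℂ) • ket 1 0 + ((Real.sin γ * Real.cos α : ℝ) : ℂ) • ket 1 1

/-- The state a₄ = cos γ sin α |00⟩ − sin γ sin β |01⟩ − sin γ cos β |10⟩ + cos γ cos α |11⟩. -/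
def aVec4 (α β γ : ℝ) : TwoQubit :=
  ((Real.cos γ * Real.sin α : ℝ) : ℂ) • ket 0 0 - ((Real.sin γ * Real.sin β : ℝ) : ℂ) • ket 0 1 -
  ((Real.sin γ * Real.cos β : ℝ) : ℂ) • ket 1 0 + ((Real.cos γ * Real.cos α : ℝ) : ℂ) • ket 1 1

open Polynomial Matrix

private def e9 : Fin 2 × Fin 2 ≃ Fin 2 ⊕ Fin 2 where
  toFun p := if p.1 = p.2 then Sum.inl p.1 else Sum.inr p.1
  invFun s := Sum.elim (fun i => (i, i)) (fun j => (j, j + 1)) s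
  left_inv := by decide
  right_inv := by decide

set_option maxHeartbeats 1000000 in
private theorem blocks9 (α β : ℝ) :
    reindex e9 e9 (ptrans (projMat (aVec1 α) (aVec2 β))) =
    fromBlocks
      !![((Real.cos α : ℂ)^2), -(Real.cos β : ℂ) * (Real.sin β : ℂ);
         -(Real.cos β : ℂ) * (Real.sin β : ℂ), ((Real.sin α : ℂ)^2)]
      0 0
      !![((Real.cos β : ℂ)^2), -(Real.cos α : ℂ) * (Real.sin α : ℂ);
         -(Real.cos α : ℂ) * (Real.sin α : ℂ), ((Real.sin β : ℂ)^2)] := by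
  ext i j
  rcases i with i | i <;> rcases j with j | j <;> fin_cases i <;> fin_cases j <;>
    simp (config := { decide := true }) [ptrans, projMat, aVec1, aVec2, ket, e9,
      EuclideanSpace.single_apply, Complex.conj_ofReal,
      -Complex.ofReal_cos, -Complex.ofReal_sin, fromBlocks] <;>
    ring_nf

private theorem quad2 (a b d : ℂ) :
    (!![a, b; b, d]).charpoly = X^2 - C (a + d) * X + C (a * d - b^2) := by
  rw [Matrix.charpoly, Matrix.det_fin_two]
  simp [charmatrix_apply_eq, charmatrix_apply_ne]
  ring

private theorem quadpair (D : ℝ) (hD : 0 ≤ D) :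
    (X - C ((((1:ℝ)/4) * (2 - Real.sqrt 2 * Real.sqrt D) : ℝ) : ℂ)) *
    (X - C ((((1:ℝ)/4) * (2 + Real.sqrt 2 * Real.sqrt D) : ℝ) : ℂ)) =
    X^2 - C (1 : ℂ) * X + C ((((2 - D)/8 : ℝ)) : ℂ) := by
  have hs : Real.sqrt 2 * Real.sqrt D * (Real.sqrt 2 * Real.sqrt D) = 2 * D := by
    rw [mul_mul_mul_comm, Real.mul_self_sqrt (by norm_num), Real.mul_self_sqrt hD]
  have h1r : ((1:ℝ)/4) * (2 - Real.sqrt 2 * Real.sqrt D)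
      + ((1:ℝ)/4) * (2 + Real.sqrt 2 * Real.sqrt D) = 1 := by ring
  have h2r : (((1:ℝ)/4) * (2 - Real.sqrt 2 * Real.sqrt D))
      * (((1:ℝ)/4) * (2 + Real.sqrt 2 * Real.sqrt D)) = (2 - D)/8 := by
    linear_combination (-(1:ℝ)/16) * hs
  have hsum : C ((((1:ℝ)/4) * (2 - Real.sqrt 2 * Real.sqrt D) : ℝ) : ℂ)
      + C ((((1:ℝ)/4) * (2 + Real.sqrt 2 * Real.sqrt D) : ℝ) : ℂ) = C (1 : ℂ) := by
    rw [← C_add]; congr 1; exact_mod_cast h1r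
  have hmul : C ((((1:ℝ)/4) * (2 - Real.sqrt 2 * Real.sqrt D) : ℝ) : ℂ)
      * C ((((1:ℝ)/4) * (2 + Real.sqrt 2 * Real.sqrt D) : ℝ) : ℂ)
      = C ((((2 - D)/8 : ℝ)) : ℂ) := by
    rw [← C_mul]; congr 1; exact_mod_cast h2r
  linear_combination hmul - X * hsum

private theorem cos4 (x : ℝ) :
    ((Real.cos (4 * x) : ℝ) : ℂ) = 1 - 8 * (Real.cos x : ℂ)^2 * (Real.sin x : ℂ)^2 := by
  push_cast
  rw [show ((4:ℂ) * x) = 2 * (2 * (x:ℂ)) by ring, Complex.cos_two_mul, Complex.cos_two_mul]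
  linear_combination (8 * Complex.cos (x:ℂ)^2) * (Complex.sin_sq_add_cos_sq (x:ℂ))


open Polynomial in
/-- The partial transpose of P₁₂ = a₁a₁* + a₂a₂* has exactly the eigenvalues
(1/4)(2 ± √2·√(2 + cos 4α − cos 4β)) and (1/4)(2 ± √2·√(2 − cos 4α + cos 4β)),
counted with multiplicity (stated via the characteristic polynomial). -/
theorem stmt9 (α β : ℝ) (hα : α ∈ Set.Icc 0 (Real.pi / 2))
    (hβ : β ∈ Set.Icc 0 (Real.pi / 2)) :
    (ptrans (projMat (aVec1 α) (aVec2 β))).charpoly =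
      (X - C (((1 / 4 : ℝ) * (2 - Real.sqrt 2 *
          Real.sqrt (2 + Real.cos (4 * α) - Real.cos (4 * β))) : ℝ) : ℂ)) *
      (X - C (((1 / 4 : ℝ) * (2 + Real.sqrt 2 *
          Real.sqrt (2 + Real.cos (4 * α) - Real.cos (4 * β))) : ℝ) : ℂ)) *
      (X - C (((1 / 4 : ℝ) * (2 - Real.sqrt 2 *
          Real.sqrt (2 - Real.cos (4 * α) + Real.cos (4 * β))) : ℝ) : ℂ)) *
      (X - C (((1 / 4 : ℝ) * (2 + Real.sqrt 2 *
          Real.sqrt (2 - Real.cos (4 * α) + Real.cos (4 * β))) : ℝ) : ℂ)) := by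
  have hD1 : (0:ℝ) ≤ 2 + Real.cos (4 * α) - Real.cos (4 * β) := by
    nlinarith [Real.neg_one_le_cos (4 * α), Real.cos_le_one (4 * β)]
  have hD2 : (0:ℝ) ≤ 2 - Real.cos (4 * α) + Real.cos (4 * β) := by
    nlinarith [Real.neg_one_le_cos (4 * β), Real.cos_le_one (4 * α)]
  rw [← Matrix.charpoly_reindex e9, blocks9, charpoly_fromBlocks_zero₁₂, quad2, quad2,
    mul_assoc, quadpair _ hD1, quadpair _ hD2]
  have hA : ((Real.cos α : ℂ)^2 + (Real.sin α : ℂ)^2) = 1 := by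
    norm_cast; exact_mod_cast Real.cos_sq_add_sin_sq α
  have hB : ((Real.cos β : ℂ)^2 + (Real.sin β : ℂ)^2) = 1 := by
    norm_cast; exact_mod_cast Real.cos_sq_add_sin_sq β
  have k1 : (Real.cos α : ℂ)^2 * (Real.sin α : ℂ)^2
      - (-(Real.cos β : ℂ) * (Real.sin β : ℂ))^2
      = (((2 - (2 + Real.cos (4 * α) - Real.cos (4 * β)))/8 : ℝ) : ℂ) := by
    have h1 := cos4 α; have h2 := cos4 β
    push_cast at h1 h2 ⊢
    ring_nf at h1 h2 ⊢
    linear_combination (1/8 : ℂ) * h1 + (-1/8 : ℂ) * h2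
  have k2 : (Real.cos β : ℂ)^2 * (Real.sin β : ℂ)^2
      - (-(Real.cos α : ℂ) * (Real.sin α : ℂ))^2
      = (((2 - (2 - Real.cos (4 * α) + Real.cos (4 * β)))/8 : ℝ) : ℂ) := by
    have h1 := cos4 α; have h2 := cos4 β
    push_cast at h1 h2 ⊢
    ring_nf at h1 h2 ⊢
    linear_combination (-1/8 : ℂ) * h1 + (1/8 : ℂ) * h2
  rw [hA, hB, k1, k2]
end
end

section
/- Let α, β ∈ [0, π/2] with cos(4α) ≠ cos(4β). Then the partial transpose of the projection P₁₂ onto span{cosα·|00⟩ − sinα·|11⟩, cosβ·|01⟩ − sinβ·|10⟩} ⊂ ℂ²⊗ℂ² has a strictly negative eigenvalue. In particular P₁₂ is not a separable operator. -/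
noncomputable section

open scoped ComplexOrder

/-! In the basis |00⟩, |11⟩, |01⟩, |10⟩ the partial transpose of P₁₂ is block diagonal with
real symmetric blocks `[[cos² α, -cos β sin β], [-cos β sin β, sin² α]]` and
`[[cos² β, -cos α sin α], [-cos α sin α, sin² β]]`, whose determinants are `±(u² - v²)` for
`u = cos α sin α`, `v = cos β sin β`. So its determinant is `-(u² - v²)²`, and
`cos 4x = 1 - 8 (cos x sin x)²` makes this negative exactly when `cos 4α ≠ cos 4β`.
A Hermitian matrix with negative determinant has a negative eigenvalue, since the determinant
is the product of the eigenvalues. It is also not positive semidefinite, whereas the partial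
transpose of a separable operator is a sum of Kronecker products of positive semidefinite
matrices (Peres criterion). -/

open Matrix

lemma Matrix.IsHermitian.exists_neg_eigenvalue_of_det_neg {𝕜 n : Type*} [RCLike 𝕜] [Fintype n]
    [DecidableEq n] {A : Matrix n n 𝕜} (hA : A.IsHermitian) (hdet : A.det < 0) :
    ∃ c : ℝ, c < 0 ∧ ∃ x : n → 𝕜, x ≠ 0 ∧ A *ᵥ x = (c : 𝕜) • x := by
  obtain ⟨i, hi⟩ : ∃ i, hA.eigenvalues i < 0 := by
    by_contra! h
    exact hdet.not_ge (hA.posSemidef_iff_eigenvalues_nonneg.mpr h).det_nonneg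
  refine ⟨_, hi, _, ?_, (hA.mulVec_eigenvectorBasis i).trans (RCLike.real_smul_eq_coe_smul _ _)⟩
  exact fun h0 => hA.eigenvectorBasis.orthonormal.ne_zero i (by ext j; exact congrFun h0 j)

lemma isHermitian_projMat (v w : TwoQubit) : (projMat v w).IsHermitian := by
  ext p q
  simp [projMat, mul_comm]

lemma Matrix.IsHermitian.ptrans {M : Matrix (Fin 2 × Fin 2) (Fin 2 × Fin 2) ℂ}
    (hM : M.IsHermitian) : (ptrans M).IsHermitian := by
  ext p q
  exact congrFun₂ hM (p.1, q.2) (q.1, p.2)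

lemma ptrans_sum {ι : Type*} (s : Finset ι) (M : ι → Matrix (Fin 2 × Fin 2) (Fin 2 × Fin 2) ℂ) :
    ptrans (∑ i ∈ s, M i) = ∑ i ∈ s, ptrans (M i) := by
  ext p q
  simp [ptrans, Matrix.sum_apply]

lemma ptrans_kronecker (A B : Matrix (Fin 2) (Fin 2) ℂ) :
    ptrans (kroneckerMap (· * ·) A B) = kroneckerMap (· * ·) A Bᵀ :=
  rfl

lemma SeparableOp.posSemidef_ptrans {M : Matrix (Fin 2 × Fin 2) (Fin 2 × Fin 2) ℂ}
    (hM : SeparableOp M) : (ptrans M).PosSemidef := by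
  obtain ⟨n, A, B, hA, hB, rfl⟩ := hM
  rw [ptrans_sum]
  exact posSemidef_sum _ fun i _ => ptrans_kronecker (A i) (B i) ▸ (hA i).kronecker (hB i).transpose

lemma reindex_ptrans_projMat_aVec1_aVec2 (α β : ℝ) :
    reindex finProdFinEquiv finProdFinEquiv (ptrans (projMat (aVec1 α) (aVec2 β))) =
      (!![Real.cos α ^ 2, 0, 0, -(Real.cos β * Real.sin β);
          0, Real.cos β ^ 2, -(Real.cos α * Real.sin α), 0;
          0, -(Real.cos α * Real.sin α), Real.sin β ^ 2, 0;
          -(Real.cos β * Real.sin β), 0, 0, Real.sin α ^ 2] : Matrix (Fin 4) (Fin 4) ℝ).map (↑) := by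
  ext i j
  fin_cases i <;> fin_cases j <;>
    simp [ptrans, projMat, aVec1, aVec2, ket, finProdFinEquiv, Fin.divNat, Fin.modNat, Prod.ext_iff,
      -Complex.ofReal_cos, -Complex.ofReal_sin, Complex.conj_ofReal] <;>
    ring

lemma det_ptrans_projMat_aVec1_aVec2 (α β : ℝ) :
    (ptrans (projMat (aVec1 α) (aVec2 β))).det =
      ((-((Real.cos α * Real.sin α) ^ 2 - (Real.cos β * Real.sin β) ^ 2) ^ 2 : ℝ) : ℂ) := by
  rw [← det_reindex_self finProdFinEquiv, reindex_ptrans_projMat_aVec1_aVec2]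
  refine (Complex.ofRealHom.map_det _).symm.trans (congrArg Complex.ofReal ?_)
  simp [det_succ_row_zero, Fin.sum_univ_succ, Fin.succAbove]
  ring

lemma Real.cos_four_mul_eq_one_sub (x : ℝ) :
    Real.cos (4 * x) = 1 - 8 * (Real.cos x * Real.sin x) ^ 2 := by
  rw [show 4 * x = 2 * (2 * x) by ring, Real.cos_two_mul_eq_one_sub, Real.sin_two_mul]
  ring

theorem stmt10_general (α β : ℝ) (h : Real.cos (4 * α) ≠ Real.cos (4 * β)) :
    HasNegEig (ptrans (projMat (aVec1 α) (aVec2 β))) ∧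
    ¬ SeparableOp (projMat (aVec1 α) (aVec2 β)) := by
  have hne : (Real.cos α * Real.sin α) ^ 2 - (Real.cos β * Real.sin β) ^ 2 ≠ 0 := fun h0 =>
    h (by rw [Real.cos_four_mul_eq_one_sub, Real.cos_four_mul_eq_one_sub]; linarith)
  have hdet : (ptrans (projMat (aVec1 α) (aVec2 β))).det < 0 := by
    rw [det_ptrans_projMat_aVec1_aVec2]
    exact_mod_cast neg_neg_of_pos (sq_pos_of_ne_zero hne)
  exact ⟨(isHermitian_projMat _ _).ptrans.exists_neg_eigenvalue_of_det_neg hdet,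
    fun hsep => hdet.not_ge hsep.posSemidef_ptrans.det_nonneg⟩

/-- If cos 4α ≠ cos 4β then the partial transpose of P₁₂ has a strictly negative
eigenvalue; in particular P₁₂ is not separable. -/
theorem stmt10 (α β : ℝ) (hα : α ∈ Set.Icc 0 (Real.pi / 2))
    (hβ : β ∈ Set.Icc 0 (Real.pi / 2)) (h : Real.cos (4 * α) ≠ Real.cos (4 * β)) :
    HasNegEig (ptrans (projMat (aVec1 α) (aVec2 β))) ∧
    ¬ SeparableOp (projMat (aVec1 α) (aVec2 β)) :=
  stmt10_general α β h
end
end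

section
/- If an orthonormal basis {v₁, v₂, v₃, v₄} of ℂ²⊗ℂ² is such that v₁, v₂, v₃ are product vectors, then v₄ is also a product vector. Equivalently, no orthonormal basis of ℂ²⊗ℂ² contains exactly one entangled (non-product) vector. -/
noncomputable section

open scoped ComplexOrder

/-!
Let `J` be the spin flip and `B x y = ⟪J x, y⟫`. Then `B` is a symmetric bilinear form with
`B x x = 2 det x`, and `⟪J x, J y⟫ = ⟪y, x⟫`, so the matrix `S` of `B` in an orthonormal basis is
symmetric and unitary, and its diagonal entries vanish exactly at the product vectors. If
`S₀₀ = S₁₁ = S₂₂ = 0`, the unit row sums of `|S|²` together with the orthogonality of the first two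
rows leave no room for a nonzero `S₃₃`.
-/

open ComplexConjugate

lemma isProductVec_iff_det_coeffMat_eq_zero (v : TwoQubit) :
    IsProductVec v ↔ (coeffMat v).det = 0 := by
  rw [Matrix.det_fin_two]
  simp only [coeffMat, Matrix.of_apply]
  constructor
  · rintro ⟨u, w, h⟩
    simp only [h]
    ring
  · intro h
    by_cases h00 : v (0, 0) = 0
    · by_cases h01 : v (0, 1) = 0
      · refine ⟨![0, 1], ![v (1, 0), v (1, 1)], fun a b => ?_⟩
        fin_cases a <;> fin_cases b <;> simp [h00, h01]
      · have h10 : v (1, 0) = 0 := by simpa [h00, h01] using h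
        refine ⟨![v (0, 1), v (1, 1)], ![0, 1], fun a b => ?_⟩
        fin_cases a <;> fin_cases b <;> simp [h00, h10]
    · refine ⟨![v (0, 0), v (1, 0)], ![1, v (0, 1) / v (0, 0)], fun a b => ?_⟩
      fin_cases a <;> fin_cases b <;> simp
      · field_simp
      · field_simp
        linear_combination h

-- Wootters' spin flip `x ↦ (σ_y ⊗ σ_y) x̄`.
def spinFlip (x : TwoQubit) : TwoQubit :=
  WithLp.toLp 2 fun p =>
    !![conj (x (1, 1)), -conj (x (1, 0)); -conj (x (0, 1)), conj (x (0, 0))] p.1 p.2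

lemma inner_twoQubit (x y : TwoQubit) :
    inner ℂ x y = conj (x (0, 0)) * y (0, 0) + conj (x (0, 1)) * y (0, 1)
      + conj (x (1, 0)) * y (1, 0) + conj (x (1, 1)) * y (1, 1) := by
  simp only [PiLp.inner_apply, RCLike.inner_apply, Fintype.sum_prod_type, Fin.sum_univ_two]
  ring

lemma inner_spinFlip_left (x y : TwoQubit) :
    inner ℂ (spinFlip x) y
      = x (0, 0) * y (1, 1) - x (0, 1) * y (1, 0) - x (1, 0) * y (0, 1) + x (1, 1) * y (0, 0) := by
  simp [inner_twoQubit, spinFlip]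
  ring

lemma inner_spinFlip_spinFlip (x y : TwoQubit) :
    inner ℂ (spinFlip x) (spinFlip y) = inner ℂ y x := by
  simp [inner_twoQubit, spinFlip]
  ring

lemma inner_spinFlip_comm (x y : TwoQubit) :
    inner ℂ (spinFlip x) y = inner ℂ (spinFlip y) x := by
  rw [inner_spinFlip_left, inner_spinFlip_left]
  ring

lemma inner_spinFlip_self (x : TwoQubit) : inner ℂ (spinFlip x) x = 2 * (coeffMat x).det := by
  rw [inner_spinFlip_left, Matrix.det_fin_two]
  simp only [coeffMat, Matrix.of_apply]
  ring

open Matrix in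
lemma OrthonormalBasis.of_inner_antiunitary_mem_unitaryGroup {𝕜 E ι : Type*} [RCLike 𝕜]
    [NormedAddCommGroup E] [InnerProductSpace 𝕜 E] [Fintype ι] [DecidableEq ι]
    (b : OrthonormalBasis ι 𝕜 E) {J : E → E} (hJ : ∀ x y, inner 𝕜 (J x) (J y) = inner 𝕜 y x) :
    of (fun i j => inner 𝕜 (J (b i)) (b j)) ∈ unitaryGroup ι 𝕜 := by
  rw [mem_unitaryGroup_iff]
  ext i k
  simp only [mul_apply, star_apply, of_apply, RCLike.star_def, inner_conj_symm,
    b.sum_inner_mul_inner, hJ, b.inner_eq_ite, one_apply, eq_comm]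

-- With `t = 1 - (A + B + D)` the sums give `C = t + D`, `E = t + B`, `G = -2t`,
-- and `B D = C E` becomes `t (t + B + D) = 0`.
lemma corner_eq_zero_of_row_sums {A B C D E F G : ℝ} (hC : 0 ≤ C) (hE : 0 ≤ E) (hG : 0 ≤ G)
    (h0 : A + B + C = 1) (h1 : A + D + E = 1) (h2 : B + D + F = 1)
    (h3 : C + E + F + G = 1) (h01 : B * D = C * E) : G = 0 := by
  set t := 1 - (A + B + D)
  have hC' : C = t + D := by linarith
  have hE' : E = t + B := by linarith
  have ht : t * (t + B + D) = 0 := by rw [hC', hE'] at h01; linarith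
  have : t = 0 := by nlinarith [mul_nonneg hC hG, mul_nonneg hE hG]
  linarith

open Matrix in
lemma Matrix.IsSymm.apply_three_three_eq_zero {S : Matrix (Fin 4) (Fin 4) ℂ} (hsymm : S.IsSymm)
    (hS : S ∈ unitaryGroup (Fin 4) ℂ) (h0 : S 0 0 = 0) (h1 : S 1 1 = 0) (h2 : S 2 2 = 0) :
    S 3 3 = 0 := by
  rw [mem_unitaryGroup_iff] at hS
  have row (i k : Fin 4) : ∑ j, S i j * conj (S k j) = if i = k then 1 else 0 := by
    simpa [mul_apply, one_apply] using congr($hS i k)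
  have rowNorm (i : Fin 4) : ∑ j, ‖S i j‖ ^ 2 = 1 := by
    have := row i i
    simp only [Complex.mul_conj', if_true] at this
    exact_mod_cast this
  have orth : ‖S 0 2‖ * ‖S 1 2‖ = ‖S 0 3‖ * ‖S 1 3‖ := by
    have h : S 0 2 * conj (S 1 2) = -(S 0 3 * conj (S 1 3)) := by
      simpa [Fin.sum_univ_four, h0, h1, add_eq_zero_iff_eq_neg] using row 0 1
    simpa using congr(‖$h‖)
  have r0 := rowNorm 0
  have r1 := rowNorm 1
  have r2 := rowNorm 2
  have r3 := rowNorm 3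
  simp only [Fin.sum_univ_four, hsymm.apply, h0, h1, h2, norm_zero, ne_eq, OfNat.ofNat_ne_zero,
    not_false_eq_true, zero_pow, zero_add, add_zero] at r0 r1 r2 r3
  have h33 : ‖S 3 3‖ ^ 2 = 0 :=
    corner_eq_zero_of_row_sums (by positivity) (by positivity) (by positivity) r0 r1 r2 r3
      (by rw [← mul_pow, ← mul_pow, orth])
  simpa using h33

/-- If an orthonormal basis of ℂ² ⊗ ℂ² has three product vectors, the fourth is also
a product vector. -/
theorem stmt13 (v : Fin 4 → TwoQubit) (hon : Orthonormal ℂ v)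
    (hspan : Submodule.span ℂ (Set.range v) = ⊤)
    (h0 : IsProductVec (v 0)) (h1 : IsProductVec (v 1)) (h2 : IsProductVec (v 2)) :
    IsProductVec (v 3) := by
  let b := OrthonormalBasis.mk hon hspan.ge
  let S := Matrix.of fun i j => inner ℂ (spinFlip (b i)) (b j)
  have hsymm : S.IsSymm := Matrix.IsSymm.ext fun i j => inner_spinFlip_comm (b j) (b i)
  have hS : S ∈ Matrix.unitaryGroup (Fin 4) ℂ :=
    b.of_inner_antiunitary_mem_unitaryGroup inner_spinFlip_spinFlip
  have hdiag (i : Fin 4) : S i i = 2 * (coeffMat (v i)).det := by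
    simp [S, b, inner_spinFlip_self]
  rw [isProductVec_iff_det_coeffMat_eq_zero] at h0 h1 h2 ⊢
  have h33 := hsymm.apply_three_three_eq_zero hS (by simp [hdiag, h0]) (by simp [hdiag, h1])
    (by simp [hdiag, h2])
  simpa [hdiag] using h33
end
end

section
/- Let α, β ∈ (0, π/2) with α ≠ β and α + β ≠ π/2, and γ = π/4. Then all four vectors a₁, a₂, a₃, a₄ of the ensemble A_{π/4}^[α,β] are entangled, i.e., none is a product vector. -/
/-!
A vector of ℂ² ⊗ ℂ² whose coefficient matrix has nonzero determinant is not a product vector.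
The determinants of a₁, a₂ are -sin 2α / 2 and sin 2β / 2, nonzero on (0, π/2); at γ = π/4 those
of a₃, a₄ are ±(sin 2α - sin 2β) / 4, and sin 2α - sin 2β = 2 sin (α - β) cos (α + β) vanishes on
(0, π/2)² only when α = β or α + β = π/2.
-/

noncomputable section

open scoped ComplexOrder

open Real

lemma ket_apply (a b c d : Fin 2) :
    ket a b (c, d) = if (c, d) = (a, b) then 1 else 0 := by
  simp [ket]

lemma det_coeffMat (v : TwoQubit) :
    (coeffMat v).det = v (0, 0) * v (1, 1) - v (0, 1) * v (1, 0) :=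
  Matrix.det_fin_two _

lemma IsProductVec.det_coeffMat_eq_zero {v : TwoQubit} (h : IsProductVec v) :
    (coeffMat v).det = 0 := by
  obtain ⟨u, w, huw⟩ := h
  rw [det_coeffMat, huw 0 0, huw 1 1, huw 0 1, huw 1 0]
  ring

lemma not_isProductVec_of_det_ne_zero {v : TwoQubit} (h : (coeffMat v).det ≠ 0) :
    ¬ IsProductVec v :=
  fun hv => h hv.det_coeffMat_eq_zero

lemma det_coeffMat_aVec1 (α : ℝ) :
    (coeffMat (aVec1 α)).det = ((-(sin (2 * α) / 2) : ℝ) : ℂ) := by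
  simp only [det_coeffMat, aVec1, PiLp.sub_apply, PiLp.smul_apply, ket_apply, smul_eq_mul]
  norm_num [Prod.ext_iff, Fin.ext_iff, sin_two_mul]
  ring

lemma det_coeffMat_aVec2 (β : ℝ) :
    (coeffMat (aVec2 β)).det = ((sin (2 * β) / 2 : ℝ) : ℂ) := by
  simp only [det_coeffMat, aVec2, PiLp.sub_apply, PiLp.smul_apply, ket_apply, smul_eq_mul]
  norm_num [Prod.ext_iff, Fin.ext_iff, sin_two_mul]
  ring

lemma det_coeffMat_aVec3 (α β γ : ℝ) :
    (coeffMat (aVec3 α β γ)).det =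
      (((sin γ ^ 2 * sin (2 * α) - cos γ ^ 2 * sin (2 * β)) / 2 : ℝ) : ℂ) := by
  simp only [det_coeffMat, aVec3, PiLp.add_apply, PiLp.smul_apply, ket_apply, smul_eq_mul]
  norm_num [Prod.ext_iff, Fin.ext_iff, sin_two_mul]
  ring

lemma det_coeffMat_aVec4 (α β γ : ℝ) :
    (coeffMat (aVec4 α β γ)).det =
      (((cos γ ^ 2 * sin (2 * α) - sin γ ^ 2 * sin (2 * β)) / 2 : ℝ) : ℂ) := by
  simp only [det_coeffMat, aVec4, PiLp.add_apply, PiLp.sub_apply, PiLp.smul_apply, ket_apply,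
    smul_eq_mul]
  norm_num [Prod.ext_iff, Fin.ext_iff, sin_two_mul]
  ring

lemma sin_two_mul_pos {α : ℝ} (hα : α ∈ Set.Ioo 0 (π / 2)) : 0 < sin (2 * α) :=
  sin_pos_of_pos_of_lt_pi (by linarith [hα.1]) (by linarith [hα.2])

lemma sin_two_mul_ne_sin_two_mul {α β : ℝ} (hα : α ∈ Set.Ioo 0 (π / 2))
    (hβ : β ∈ Set.Ioo 0 (π / 2)) (hne : α ≠ β) (hsum : α + β ≠ π / 2) :
    sin (2 * α) ≠ sin (2 * β) := by
  obtain ⟨hα₀, hα₁⟩ := hα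
  obtain ⟨hβ₀, hβ₁⟩ := hβ
  have hsin : sin (α - β) ≠ 0 := by
    rw [Ne, sin_eq_zero_iff_of_lt_of_lt (by linarith) (by linarith)]
    exact sub_ne_zero.mpr hne
  have hcos : cos (α + β) ≠ 0 := by
    rw [← sin_pi_div_two_sub, Ne, sin_eq_zero_iff_of_lt_of_lt (by linarith) (by linarith)]
    exact fun h => hsum (by linarith)
  have hdiff : sin (2 * α) - sin (2 * β) = 2 * sin (α - β) * cos (α + β) := by
    rw [sin_sub_sin]; ring_nf
  rw [← sub_ne_zero, hdiff]
  exact mul_ne_zero (mul_ne_zero two_ne_zero hsin) hcos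

/-- For α, β ∈ (0, π/2) with α ≠ β and α + β ≠ π/2, all four states of
A_{π/4}^[α,β] are entangled. -/
theorem stmt17 (α β : ℝ) (hα : α ∈ Set.Ioo 0 (Real.pi / 2))
    (hβ : β ∈ Set.Ioo 0 (Real.pi / 2)) (hne : α ≠ β) (hsum : α + β ≠ Real.pi / 2) :
    ¬ IsProductVec (aVec1 α) ∧ ¬ IsProductVec (aVec2 β) ∧
    ¬ IsProductVec (aVec3 α β (Real.pi / 4)) ∧ ¬ IsProductVec (aVec4 α β (Real.pi / 4)) := by
  have hsin_sq : sin (π / 4) ^ 2 = 1 / 2 := by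
    rw [sin_pi_div_four, div_pow, sq_sqrt zero_le_two]; norm_num
  have hcos_sq : cos (π / 4) ^ 2 = 1 / 2 := by
    rw [cos_pi_div_four, div_pow, sq_sqrt zero_le_two]; norm_num
  have hα₂ := sin_two_mul_pos hα
  have hβ₂ := sin_two_mul_pos hβ
  have hαβ := sub_ne_zero.mpr (sin_two_mul_ne_sin_two_mul hα hβ hne hsum)
  refine ⟨?_, ?_, ?_, ?_⟩ <;> apply not_isProductVec_of_det_ne_zero
  · rw [det_coeffMat_aVec1, Complex.ofReal_ne_zero]; linarith
  · rw [det_coeffMat_aVec2, Complex.ofReal_ne_zero]; linarith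
  · rw [det_coeffMat_aVec3, Complex.ofReal_ne_zero, hsin_sq, hcos_sq]
    contrapose! hαβ; linarith
  · rw [det_coeffMat_aVec4, Complex.ofReal_ne_zero, hsin_sq, hcos_sq]
    contrapose! hαβ; linarith
end
end

section
/- Let v, w ∈ ℂ²⊗ℂ² be orthonormal vectors such that the orthogonal projections P = vv* + ww* and P^C = I − P both have positive semidefinite partial transposes. If both v and w are written via coefficient matrices M_v, M_w, then it is not possible that exactly one of det M_v, det M_w is zero. (Equivalently: if the projector onto a 2-dimensional subspace of ℂ²⊗ℂ² spanned by one product vector and one entangled vector, then its partial transpose is not positive semidefinite.) -/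
noncomputable section

open scoped ComplexOrder

/-!
Write `Q` for the partial transpose of `P`. Partial transposition preserves the trace and the
trace form `tr (X * Y)`, so `tr Q² = tr P² = tr P = tr Q = 2`. As `0 ≤ Q ≤ 1`, the matrix
`Q - Q² = √Q (1 - Q) √Q` is positive semidefinite with zero trace, so `Q` is a projection of
rank `2`. If `v` is a product vector, the partial transpose of `vv*` has rank `≤ 1`; if `w` is
entangled, the partial transpose of `ww*` is invertible, since on coefficient matrices it acts as
`Y ↦ M_w Yᵀ M̄_w`. Then `ptrans (ww*) = Q - ptrans (vv*)` would have rank `4 ≤ 2 + 1`.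
-/

open Matrix

section Rank

variable {K m n : Type*} [Field K] [Fintype n]

theorem Matrix.rank_sub_le (A B : Matrix m n K) : (A - B).rank ≤ A.rank + B.rank := by
  have hrange : LinearMap.range (A - B).mulVecLin ≤
      LinearMap.range A.mulVecLin ⊔ LinearMap.range B.mulVecLin := by
    rintro _ ⟨x, rfl⟩
    rw [mulVecLin_apply, sub_mulVec]
    exact Submodule.sub_mem_sup ⟨x, rfl⟩ ⟨x, rfl⟩
  exact (Submodule.finrank_mono hrange).trans (Submodule.finrank_add_le_finrank_add_finrank _ _)

theorem Matrix.rank_eq_trace_of_isIdempotentElem [CharZero K] [DecidableEq n]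
    {A : Matrix n n K} (hA : IsIdempotentElem A) : (A.rank : K) = A.trace := by
  have hA' : IsIdempotentElem A.toLin' := hA.map toLinAlgEquiv'
  rw [← trace_toLin'_eq, (LinearMap.IsIdempotentElem.isProj_range _ hA').trace]
  rfl

end Rank

theorem Matrix.PosSemidef.isIdempotentElem_of_trace_mul_self {𝕜 n : Type*} [RCLike 𝕜]
    [Fintype n] [DecidableEq n] {Q : Matrix n n 𝕜} (hQ : Q.PosSemidef)
    (hQ₁ : (1 - Q).PosSemidef) (htr : (Q * Q).trace = Q.trace) : IsIdempotentElem Q := by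
  obtain ⟨S, hS, hSS⟩ : ∃ S : Matrix n n 𝕜, Sᴴ = S ∧ S * S = Q :=
    open scoped MatrixOrder in
    ⟨CFC.sqrt Q, (CFC.sqrt_nonneg Q).posSemidef.isHermitian, CFC.sqrt_mul_sqrt_self Q hQ.nonneg⟩
  have hpsd : (Q - Q * Q).PosSemidef := by
    have hconj : S * (1 - Q) * Sᴴ = Q - Q * Q := by rw [hS, ← hSS]; noncomm_ring
    exact hconj ▸ hQ₁.mul_mul_conjTranspose_same S
  have h0 := hpsd.trace_eq_zero_iff.mp (by rw [trace_sub, htr, sub_self])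
  exact (sub_eq_zero.mp h0).symm

theorem Matrix.exists_eq_vecMulVec_of_det_eq_zero {K : Type*} [Field K]
    {M : Matrix (Fin 2) (Fin 2) K} (h : M.det = 0) : ∃ u x : Fin 2 → K, M = vecMulVec u x := by
  have hcross : ∀ j k, M 0 j * M 1 k = M 1 j * M 0 k := by
    rw [det_fin_two] at h
    simp only [Fin.forall_fin_two]
    exact ⟨⟨by ring, by linear_combination h⟩, by linear_combination -h, by ring⟩
  by_cases h0 : M 0 = 0
  · refine ⟨![0, 1], M 1, ?_⟩
    ext i k
    rcases Fin.exists_fin_two.mp ⟨i, rfl⟩ with rfl | rfl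
    · simp only [vecMulVec_apply, cons_val_zero, zero_mul, h0, Pi.zero_apply]
    · simp only [vecMulVec_apply, cons_val_one, cons_val_zero, one_mul]
  · obtain ⟨j, hj⟩ := Function.ne_iff.mp h0
    refine ⟨![1, M 1 j / M 0 j], M 0, ?_⟩
    ext i k
    rcases Fin.exists_fin_two.mp ⟨i, rfl⟩ with rfl | rfl
    · simp only [vecMulVec_apply, cons_val_zero, one_mul]
    · simp only [vecMulVec_apply, cons_val_one, cons_val_zero]
      rw [div_mul_eq_mul_div, eq_div_iff hj]
      linear_combination hcross j k

theorem isProductVec_of_det_coeffMat_eq_zero {v : TwoQubit} (h : (coeffMat v).det = 0) :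
    IsProductVec v := by
  obtain ⟨u, x, hux⟩ := exists_eq_vecMulVec_of_det_eq_zero h
  exact ⟨u, x, fun a b => congrFun (congrFun hux a) b⟩

section PartialTranspose

variable (M N : Matrix (Fin 2 × Fin 2) (Fin 2 × Fin 2) ℂ)

theorem ptrans_add : ptrans (M + N) = ptrans M + ptrans N := rfl

theorem ptrans_sub : ptrans (M - N) = ptrans M - ptrans N := rfl

theorem ptrans_one : ptrans 1 = 1 := by
  ext p q
  simp only [ptrans, of_apply, one_apply, Prod.ext_iff]
  grind

theorem trace_ptrans : (ptrans M).trace = M.trace := rfl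

theorem trace_ptrans_mul_ptrans : (ptrans M * ptrans N).trace = (M * N).trace := by
  simp only [trace, diag, mul_apply, ptrans, of_apply, Fintype.sum_prod_type, Fin.sum_univ_two]
  ring

end PartialTranspose

theorem projMat_eq_add (v w : TwoQubit) :
    projMat v w = vecMulVec ⇑v (star ⇑v) + vecMulVec ⇑w (star ⇑w) := rfl

theorem projMat_comm (v w : TwoQubit) : projMat v w = projMat w v := by
  rw [projMat_eq_add, projMat_eq_add, add_comm]

namespace EuclideanSpace

variable {𝕜 ι : Type*} [RCLike 𝕜] [Fintype ι]

theorem star_dotProduct_eq_inner (x y : EuclideanSpace 𝕜 ι) :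
    star ⇑x ⬝ᵥ ⇑y = inner 𝕜 x y := by
  rw [dotProduct_comm]
  rfl

theorem star_dotProduct_self_of_norm_eq_one {x : EuclideanSpace 𝕜 ι} (hx : ‖x‖ = 1) :
    star ⇑x ⬝ᵥ ⇑x = 1 := by
  rw [star_dotProduct_eq_inner, inner_self_eq_norm_sq_to_K, hx]
  norm_num

end EuclideanSpace

section Orthonormal

variable {v w : TwoQubit} (hv : ‖v‖ = 1) (hw : ‖w‖ = 1) (hvw : inner ℂ v w = (0 : ℂ))
include hv hw

theorem trace_projMat : (projMat v w).trace = 2 := by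
  rw [projMat_eq_add, trace_add, trace_vecMulVec, trace_vecMulVec, dotProduct_comm,
    EuclideanSpace.star_dotProduct_self_of_norm_eq_one hv, dotProduct_comm,
    EuclideanSpace.star_dotProduct_self_of_norm_eq_one hw]
  norm_num

include hvw

theorem projMat_mul_self : projMat v w * projMat v w = projMat v w := by
  have hvw' : star ⇑v ⬝ᵥ ⇑w = 0 := (EuclideanSpace.star_dotProduct_eq_inner v w).trans hvw
  have hwv : star ⇑w ⬝ᵥ ⇑v = 0 :=
    (EuclideanSpace.star_dotProduct_eq_inner w v).trans (inner_eq_zero_symm.mp hvw)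
  simp only [projMat_eq_add, add_mul, mul_add, vecMulVec_mul_vecMulVec, hwv, hvw',
    EuclideanSpace.star_dotProduct_self_of_norm_eq_one hv,
    EuclideanSpace.star_dotProduct_self_of_norm_eq_one hw]
  simp

end Orthonormal

theorem rank_ptrans_vecMulVec_self_le_one {v : TwoQubit} (hv : IsProductVec v) :
    (ptrans (vecMulVec ⇑v (star ⇑v))).rank ≤ 1 := by
  obtain ⟨u, x, hux⟩ := hv
  have h : ptrans (vecMulVec ⇑v (star ⇑v)) =
      vecMulVec (fun p => u p.1 * star (x p.2)) (star fun p => u p.1 * star (x p.2)) := by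
    ext p q
    simp only [ptrans, of_apply, vecMulVec_apply, Pi.star_apply, hux, star_mul', star_star]
    ring
  exact h ▸ rank_vecMulVec_le _ _

theorem isUnit_ptrans_vecMulVec_self {w : TwoQubit} (hw : (coeffMat w).det ≠ 0) :
    IsUnit (ptrans (vecMulVec ⇑w (star ⇑w))) := by
  set M := coeffMat w
  have hM : IsUnit M := (isUnit_iff_isUnit_det M).mpr hw.isUnit
  have hM' : IsUnit Mᴴᵀ := by simpa using hM
  rw [isUnit_iff_isUnit_det, isUnit_iff_ne_zero, Ne, ← exists_mulVec_eq_zero_iff]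
  rintro ⟨y, hy0, hy⟩
  have hreshape : M * (of fun a b => y (b, a)) * Mᴴᵀ = 0 := by
    ext a b
    have hab := congrFun hy (a, b)
    simp only [mulVec, dotProduct, ptrans, of_apply, vecMulVec_apply, Pi.star_apply,
      Fintype.sum_prod_type, Fin.sum_univ_two, Pi.zero_apply] at hab
    simp only [mul_apply, transpose_apply, conjTranspose_apply, of_apply, M, coeffMat,
      Fin.sum_univ_two, Matrix.zero_apply]
    linear_combination hab
  rw [hM'.mul_left_eq_zero, hM.mul_right_eq_zero] at hreshape
  exact hy0 (funext fun p => congrFun (congrFun hreshape p.2) p.1)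

section Projector

variable {v w : TwoQubit} (hv : ‖v‖ = 1) (hw : ‖w‖ = 1) (hvw : inner ℂ v w = (0 : ℂ))
  (hP : (ptrans (projMat v w)).PosSemidef) (hPC : (ptrans (1 - projMat v w)).PosSemidef)
include hv hw hvw hP hPC

theorem isIdempotentElem_ptrans_projMat : IsIdempotentElem (ptrans (projMat v w)) := by
  refine hP.isIdempotentElem_of_trace_mul_self (by rwa [← ptrans_one, ← ptrans_sub]) ?_
  rw [trace_ptrans_mul_ptrans, projMat_mul_self hv hw hvw, trace_ptrans]

theorem rank_ptrans_projMat : (ptrans (projMat v w)).rank = 2 := by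
  have h := rank_eq_trace_of_isIdempotentElem (isIdempotentElem_ptrans_projMat hv hw hvw hP hPC)
  rw [trace_ptrans, trace_projMat hv hw] at h
  exact_mod_cast h

theorem det_coeffMat_eq_zero_of_isProductVec (hprod : IsProductVec v) :
    (coeffMat w).det = 0 := by
  by_contra hdet
  have hB : ptrans (vecMulVec ⇑w (star ⇑w)) =
      ptrans (projMat v w) - ptrans (vecMulVec ⇑v (star ⇑v)) := by
    rw [projMat_eq_add, ptrans_add, add_sub_cancel_left]
  have hrankB : (ptrans (vecMulVec ⇑w (star ⇑w))).rank = 4 := by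
    simp [rank_of_isUnit _ (isUnit_ptrans_vecMulVec_self hdet)]
  have hsub := rank_sub_le (ptrans (projMat v w)) (ptrans (vecMulVec ⇑v (star ⇑v)))
  rw [← hB, hrankB, rank_ptrans_projMat hv hw hvw hP hPC] at hsub
  have hA := rank_ptrans_vecMulVec_self_le_one hprod
  omega

end Projector

/-- If v, w are orthonormal and both the partial transpose of P = vv* + ww* and of
I − P are positive semidefinite, then it cannot be that exactly one of det M_v,
det M_w vanishes (i.e. the span of one product and one entangled vector is NPT). -/
theorem stmt19 (v w : TwoQubit) (hv : ‖v‖ = 1) (hw : ‖w‖ = 1)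
    (hvw : inner ℂ v w = (0 : ℂ))
    (hP : (ptrans (projMat v w)).PosSemidef)
    (hPC : (ptrans (1 - projMat v w)).PosSemidef) :
    ¬ Xor' ((coeffMat v).det = 0) ((coeffMat w).det = 0) := by
  rintro (⟨hdv, hdw⟩ | ⟨hdw, hdv⟩)
  · exact hdw (det_coeffMat_eq_zero_of_isProductVec hv hw hvw hP hPC
      (isProductVec_of_det_coeffMat_eq_zero hdv))
  · rw [projMat_comm] at hP hPC
    exact hdv (det_coeffMat_eq_zero_of_isProductVec hw hv (inner_eq_zero_symm.mp hvw) hP hPC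
      (isProductVec_of_det_coeffMat_eq_zero hdw))
end
end
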